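/- arXiv:1108.2977 — 2 statements merged into one kernel-verified Lean document; each statement's English description precedes it below -/
import Mathlib

section
/- Let m ≥ 1 be an integer. For every ℓ ∈ ℝ and every θ = (θ₁,…,θ_m) ∈ ℝ^m, the following identity of complex numbers holds: A_δ(θ) · ∏_{j=1}^m (2cosh ℓ − 2cos θ_j) = Σ_{q=0}^{m−1} (−1)^q (e^{(m−q)ℓ} + e^{(q−m)ℓ}) · A_{δ+ω_q}(θ) + (−1)^m · ( A_{δ+λ⁺}(θ) + A_{δ+λ⁻}(θ) ), where λ⁺ = (1,1,…,1) and λ⁻ = (1,…,1,−1). (This is the Weyl-character-formula form of the expansion of |det(e^{−ℓ/2}I_{2m} − e^{ℓ/2}u)| into irreducible characters of SO(2m), after multiplying both sides by the Weyl denominator A_δ.) -/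
open scoped BigOperators

/-- The alternating sum `A_λ(θ) = Σ_{w ∈ W_m} sgn(w) exp(i Σ_j (w·λ)_j θ_j)`, where
`W_m` consists of pairs `(σ, ε)` with `σ` a permutation of `{1,…,m}` and
`ε ∈ {±1}^m` with `∏ ε_j = 1`, and `(w·λ)_j = ε_j λ_{σ⁻¹(j)}`. -/
noncomputable def Avec (m : ℕ) (lam : Fin m → ℤ) (θ : Fin m → ℝ) : ℂ :=
  ∑ σ : Equiv.Perm (Fin m),
    ∑ ε ∈ Finset.univ.filter (fun ε : Fin m → ℤˣ => (∏ j, (ε j : ℤ)) = 1),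
      ((Equiv.Perm.sign σ : ℤ) : ℂ) *
        Complex.exp (Complex.I *
          ∑ j : Fin m, (((ε j : ℤ) * lam (σ⁻¹ j) : ℤ) : ℂ) * ((θ j : ℝ) : ℂ))

/-- `δ = (m-1, m-2, …, 1, 0)`. -/
def deltaVec (m : ℕ) : Fin m → ℤ := fun j => (m : ℤ) - 1 - (j : ℤ)

/-- `ω_q`: first `q` entries equal to `1`, the rest `0`. -/
def omegaVec (m q : ℕ) : Fin m → ℤ := fun j => if (j : ℕ) < q then 1 else 0

/-!
Summing over the sign vectors `ε` with `∏ ε = 1` is half the sum over all sign vectors plus half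
the sum weighted by `∏ ε`; hence `2 A_λ(θ) = det [2 cos (λ_k θ_j)] + det [2i sin (λ_k θ_j)]`.
The sine determinant vanishes as soon as some `λ_k = 0`, which is the case for `δ` and `δ + ω_q`
(`q < m`), and changes sign when one `λ_k` is negated, so
`A_{δ+λ⁺} + A_{δ+λ⁻} = det [2 cos ((δ + 1)_k θ_j)]`.
With the Chebyshev polynomials `C_n (2 cos φ) = 2 cos (n φ)`, the cosine determinant with exponents
`δ` is a Vandermonde determinant, `2 ∏_{i<j} (2 cos θ_i - 2 cos θ_j)`. Bordering it by one more
angle `φ₀ = iℓ` (so that `2 cos (n φ₀) = 2 cosh (n ℓ)`) multiplies it by `∏_j (2 cosh ℓ - 2 cos θ_j)`,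
and the Laplace expansion of the bordered determinant along the new row produces the right-hand
side: deleting column `q` leaves exactly the exponents `δ + ω_q`.
-/

open Polynomial Matrix Finset Complex

namespace Matrix

variable {R : Type*} [CommRing R] {n : ℕ}

theorem det_eval_rev_matrixOfPolynomials (v : Fin n → R) (p : Fin n → R[X])
    (h_deg : ∀ i, (p i).natDegree = i) (h_monic : ∀ i, (p i).Monic) :
    (of fun i j => (p j.rev).eval (v i)).det = ∏ i, ∏ j ∈ Ioi i, (v i - v j) := by
  have h_eval : (of fun i j => (p j.rev).eval (v i)) =
      (of fun i j => (p j).eval (v i)).submatrix id Fin.revPerm := rfl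
  have h_proj : projVandermonde 1 v = (vandermonde v).submatrix id Fin.revPerm := by
    ext i j
    simp [projVandermonde_apply, vandermonde_apply]
  rw [h_eval, det_permute', ← det_eval_matrixOfPolynomials_eq_det_vandermonde v p h_deg h_monic,
    ← det_permute', ← h_proj, det_projVandermonde]
  simp

end Matrix

namespace Polynomial.Chebyshev

variable (R : Type*) [CommRing R] [Nontrivial R]

theorem C_natCast_succ_monic_and_natDegree (n : ℕ) :
    (C R (n + 1 : ℕ)).Monic ∧ (C R (n + 1 : ℕ)).natDegree = n + 1 := by
  suffices ∀ n : ℕ, (C R n).natDegree ≤ n ∧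
      (C R (n + 1 : ℕ)).Monic ∧ (C R (n + 1 : ℕ)).natDegree = n + 1 from (this n).2
  intro n
  induction n with
  | zero => simp
  | succ n ih =>
    obtain ⟨hle, hmonic, hdeg⟩ := ih
    have hXp : (X * C R (n + 1 : ℕ)).Monic := monic_X.mul hmonic
    have hXdeg : (X * C R (n + 1 : ℕ)).natDegree = n + 2 := by
      rw [monic_X.natDegree_mul hmonic, natDegree_X, hdeg]; ring
    have hlt : (C R n).natDegree < (X * C R (n + 1 : ℕ)).natDegree := by omega
    have hrec : C R (n + 1 + 1 : ℕ) = X * C R (n + 1 : ℕ) - C R n := by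
      push_cast; exact C_add_two R n
    refine ⟨hdeg.le, ?_, ?_⟩ <;> rw [hrec]
    · exact hXp.sub_of_left (degree_lt_degree hlt)
    · rw [natDegree_sub_eq_left_of_natDegree_lt hlt, hXdeg]

variable {R}

theorem det_eval_C_rev {n : ℕ} (hn : n ≠ 0) (x : Fin n → R) :
    (of fun i k : Fin n => (C R (k.rev : ℕ)).eval (x i)).det =
      2 * ∏ i, ∏ j ∈ Ioi i, (x i - x j) := by
  obtain ⟨n, rfl⟩ := Nat.exists_eq_succ_of_ne_zero hn
  -- `C 0 = 2` is not monic, so the constant column is rescaled to `1`.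
  let p : Fin (n + 1) → R[X] := fun k => if (k : ℕ) = 0 then 1 else C R (k : ℕ)
  let c : Fin (n + 1) → R := fun k => if (k : ℕ) = 0 then 2 else 1
  have h_deg : ∀ k, (p k).natDegree = k := by
    intro k
    obtain ⟨_ | k, hk⟩ := k
    · simp [p]
    · simpa [p] using (C_natCast_succ_monic_and_natDegree R k).2
  have h_monic : ∀ k, (p k).Monic := by
    intro k
    obtain ⟨_ | k, hk⟩ := k
    · simp [p]
    · simpa [p] using (C_natCast_succ_monic_and_natDegree R k).1
  have h_entry : (of fun i k : Fin (n + 1) => (C R (k.rev : ℕ)).eval (x i)) =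
      of fun i k => c k.rev * (p k.rev).eval (x i) := by
    ext i k
    simp only [of_apply, p, c]
    split_ifs with hk
    · rw [hk]; simp
    · simp
  have h_prod : ∏ k : Fin (n + 1), c k.rev = 2 := by
    refine (Equiv.prod_comp Fin.revPerm c).trans ?_
    simp [c]
  rw [h_entry, ← h_prod, ← det_eval_rev_matrixOfPolynomials x p h_deg h_monic]
  exact det_mul_row (fun k : Fin (n + 1) => c k.rev) _

end Polynomial.Chebyshev

noncomputable def cosMatrix {ι κ : Type*} (lam : κ → ℤ) (φ : ι → ℂ) : Matrix ι κ ℂ :=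
  of fun j k => 2 * cos (lam k * φ j)

noncomputable def sinMatrix {ι κ : Type*} (lam : κ → ℤ) (φ : ι → ℂ) : Matrix ι κ ℂ :=
  of fun j k => 2 * I * sin (lam k * φ j)

theorem det_cosMatrix_rev {n : ℕ} (hn : n ≠ 0) (φ : Fin n → ℂ) :
    (cosMatrix (fun k : Fin n => (k.rev : ℤ)) φ).det =
      2 * ∏ i, ∏ j ∈ Ioi i, (2 * cos (φ i) - 2 * cos (φ j)) := by
  rw [← Polynomial.Chebyshev.det_eval_C_rev hn]
  congr 1
  ext i k
  simp [cosMatrix]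

theorem det_cosMatrix_rev_cons {m : ℕ} (hm : m ≠ 0) (ψ : ℂ) (φ : Fin m → ℂ) :
    (cosMatrix (fun k : Fin (m + 1) => (k.rev : ℤ)) (Fin.cons ψ φ)).det =
      (∏ j, (2 * cos ψ - 2 * cos (φ j))) * (cosMatrix (fun k : Fin m => (k.rev : ℤ)) φ).det := by
  rw [det_cosMatrix_rev (Nat.succ_ne_zero m), det_cosMatrix_rev hm, Fin.prod_univ_succ,
    Fin.prod_Ioi_zero]
  simp only [Fin.cons_zero, Fin.cons_succ, Fin.prod_Ioi_succ]
  ring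

theorem cosMatrix_units_mul {ι κ : Type*} (lam : κ → ℤ) (φ : ι → ℂ) (s : κ → ℤˣ) :
    cosMatrix (fun k => (s k : ℤ) * lam k) φ = cosMatrix lam φ := by
  ext j k
  rcases Int.units_eq_one_or (s k) with h | h <;> simp [cosMatrix, h, neg_mul]

section SquareMatrix

variable {κ : Type*} [Fintype κ] [DecidableEq κ] (lam : κ → ℤ) (φ : κ → ℂ)

theorem det_sinMatrix_eq_zero_of_eq_zero {k : κ} (hk : lam k = 0) : (sinMatrix lam φ).det = 0 :=
  det_eq_zero_of_column_eq_zero k fun j => by simp [sinMatrix, hk]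

theorem det_sinMatrix_units_mul (s : κ → ℤˣ) :
    (sinMatrix (fun k => (s k : ℤ) * lam k) φ).det =
      (∏ k, ((s k : ℤ) : ℂ)) * (sinMatrix lam φ).det := by
  rw [← det_mul_row]
  congr 1
  ext j k
  rcases Int.units_eq_one_or (s k) with h | h <;> simp [sinMatrix, h, neg_mul]

end SquareMatrix

theorem two_mul_sum_filter_prod_eq_one {ι R : Type*} [Fintype ι] [DecidableEq ι] [CommRing R]
    (f : ι → ℤˣ → R) :
    2 * ∑ ε ∈ univ.filter (fun ε : ι → ℤˣ => ∏ j, (ε j : ℤ) = 1), ∏ j, f j (ε j) =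
      ∏ j, (f j 1 + f j (-1)) + ∏ j, (f j 1 - f j (-1)) := by
  have h_sign : ∀ ε : ι → ℤˣ, (1 + ∏ j, ((ε j : ℤ) : R)) =
      if ∏ j, (ε j : ℤ) = 1 then 2 else 0 := by
    intro ε
    rw [← Int.cast_prod, ← Units.coe_prod]
    rcases Int.units_eq_one_or (∏ j, ε j) with h | h <;> norm_num [h]
  calc 2 * ∑ ε ∈ univ.filter (fun ε : ι → ℤˣ => ∏ j, (ε j : ℤ) = 1), ∏ j, f j (ε j)
      = ∑ ε : ι → ℤˣ, (1 + ∏ j, ((ε j : ℤ) : R)) * ∏ j, f j (ε j) := by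
        simp_rw [h_sign, ite_mul, zero_mul, ← sum_filter, mul_sum]
    _ = ∑ ε : ι → ℤˣ, ∏ j, f j (ε j) + ∑ ε : ι → ℤˣ, ∏ j, ((ε j : ℤ) : R) * f j (ε j) := by
        simp_rw [← sum_add_distrib, add_mul, one_mul, prod_mul_distrib]
    _ = ∏ j, (f j 1 + f j (-1)) + ∏ j, (f j 1 - f j (-1)) := by
        rw [← Fintype.prod_sum, ← Fintype.prod_sum fun j (u : ℤˣ) => ((u : ℤ) : R) * f j u]
        simp [sub_eq_add_neg]

theorem two_mul_avec (m : ℕ) (lam : Fin m → ℤ) (θ : Fin m → ℝ) :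
    2 * Avec m lam θ =
      (cosMatrix lam fun j => (θ j : ℂ)).det + (sinMatrix lam fun j => (θ j : ℂ)).det := by
  rw [Avec, mul_sum, det_apply', det_apply', ← sum_add_distrib]
  refine sum_congr rfl fun σ _ => ?_
  let f : Fin m → ℤˣ → ℂ := fun j u => exp (I * ((u : ℤ) * lam (σ⁻¹ j) * θ j))
  have h_exp : ∀ ε : Fin m → ℤˣ,
      exp (I * ∑ j, (((ε j : ℤ) * lam (σ⁻¹ j) : ℤ) : ℂ) * (θ j : ℂ)) = ∏ j, f j (ε j) := by
    intro ε
    rw [mul_sum, exp_sum]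
    push_cast
    rfl
  have h_pm : ∀ j, f j 1 = exp ((lam (σ⁻¹ j) * θ j : ℂ) * I) ∧
      f j (-1) = exp (-(lam (σ⁻¹ j) * θ j : ℂ) * I) := by
    intro j
    constructor <;> simp only [f] <;> push_cast <;> ring_nf
  have h_cos : ∀ j, f j 1 + f j (-1) = cosMatrix lam (fun j => (θ j : ℂ)) j (σ⁻¹ j) := by
    intro j
    rw [(h_pm j).1, (h_pm j).2, ← two_cos]
    rfl
  have h_sin : ∀ j, f j 1 - f j (-1) = sinMatrix lam (fun j => (θ j : ℂ)) j (σ⁻¹ j) := by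
    intro j
    rw [(h_pm j).1, (h_pm j).2, exp_mul_I, exp_mul_I, cos_neg, sin_neg]
    simp only [sinMatrix, of_apply]
    ring
  simp_rw [← mul_sum, h_exp]
  rw [mul_left_comm, two_mul_sum_filter_prod_eq_one, mul_add]
  simp_rw [h_cos, h_sin]
  rw [← Equiv.prod_comp σ fun j => cosMatrix lam (fun j => (θ j : ℂ)) j (σ⁻¹ j),
    ← Equiv.prod_comp σ fun j => sinMatrix lam (fun j => (θ j : ℂ)) j (σ⁻¹ j)]
  simp

theorem two_mul_avec_of_eq_zero {m : ℕ} (lam : Fin m → ℤ) (θ : Fin m → ℝ) {k : Fin m}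
    (hk : lam k = 0) : 2 * Avec m lam θ = (cosMatrix lam fun j => (θ j : ℂ)).det := by
  rw [two_mul_avec, det_sinMatrix_eq_zero_of_eq_zero lam _ hk, add_zero]

theorem avec_add_avec_units_mul {m : ℕ} (lam : Fin m → ℤ) (θ : Fin m → ℝ) (s : Fin m → ℤˣ)
    (hs : ∏ k, s k = -1) :
    Avec m lam θ + Avec m (fun k => (s k : ℤ) * lam k) θ =
      (cosMatrix lam fun j => (θ j : ℂ)).det := by
  have hs' : ∏ k, ((s k : ℤ) : ℂ) = -1 := by
    rw [← Int.cast_prod, ← Units.coe_prod, hs]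
    simp
  apply mul_left_cancel₀ (two_ne_zero (α := ℂ))
  rw [mul_add, two_mul_avec, two_mul_avec, cosMatrix_units_mul, det_sinMatrix_units_mul, hs']
  ring

theorem deltaVec_eq_rev (m : ℕ) : deltaVec m = fun k => (k.rev : ℤ) := by
  ext k
  simp only [deltaVec, Fin.val_rev]
  omega

theorem deltaVec_add_omegaVec (m : ℕ) (q : Fin (m + 1)) :
    (fun k => deltaVec m k + omegaVec m q k) = fun k => ((q.succAbove k).rev : ℤ) := by
  ext k
  by_cases h : (k : ℕ) < q
  · rw [Fin.succAbove_of_castSucc_lt _ _ h]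
    simp only [deltaVec, omegaVec, if_pos h, Fin.val_rev, Fin.val_castSucc]
    omega
  · rw [Fin.succAbove_of_le_castSucc _ _ (not_lt.mp h)]
    simp only [deltaVec, omegaVec, if_neg h, Fin.val_rev, Fin.val_succ]
    omega

theorem two_mul_avec_deltaVec_mul_prod {m : ℕ} (hm : m ≠ 0) (ψ : ℂ) (θ : Fin m → ℝ) :
    2 * Avec m (deltaVec m) θ * ∏ j, (2 * cos ψ - 2 * cos (θ j)) =
      ∑ q : Fin (m + 1), (-1) ^ (q : ℕ) * (2 * cos ((q.rev : ℤ) * ψ)) *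
        (cosMatrix (fun k => deltaVec m k + omegaVec m q k) fun j => (θ j : ℂ)).det := by
  have h_last : deltaVec m ⟨m - 1, by omega⟩ = 0 := by simp [deltaVec]; omega
  simp_rw [deltaVec_add_omegaVec]
  rw [two_mul_avec_of_eq_zero _ _ h_last, deltaVec_eq_rev, mul_comm,
    ← det_cosMatrix_rev_cons hm, det_succ_row_zero]
  rfl

theorem two_mul_avec_deltaVec_add_omegaVec {m : ℕ} (θ : Fin m → ℝ) (q : Fin m) :
    2 * Avec m (fun j => deltaVec m j + omegaVec m q j) θ =
      (cosMatrix (fun j => deltaVec m j + omegaVec m q j) fun j => (θ j : ℂ)).det := by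
  refine two_mul_avec_of_eq_zero _ _ (k := ⟨m - 1, by have := q.isLt; omega⟩) ?_
  simp only [deltaVec, omegaVec]
  split_ifs <;> omega

theorem avec_add_avec_halfSpin {m : ℕ} (hm : m ≠ 0) (θ : Fin m → ℝ) :
    Avec m (fun j => deltaVec m j + 1) θ +
        Avec m (fun j => deltaVec m j + (if (j : ℕ) = m - 1 then -1 else 1)) θ =
      (cosMatrix (fun j => deltaVec m j + omegaVec m m j) fun j => (θ j : ℂ)).det := by
  let last : Fin m := ⟨m - 1, by omega⟩
  let s : Fin m → ℤˣ := fun j => if j = last then -1 else 1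
  have h_prod : ∏ j, s j = -1 := by simp [s]
  have h_plus : (fun j => deltaVec m j + omegaVec m m j) = fun j => deltaVec m j + 1 := by
    ext j
    simp [omegaVec]
  have h_minus : (fun j => deltaVec m j + (if (j : ℕ) = m - 1 then -1 else 1)) =
      fun j => (s j : ℤ) * (deltaVec m j + 1) := by
    ext j
    by_cases h : j = last
    · simp [s, h, last, deltaVec]
      omega
    · have h' : (j : ℕ) ≠ m - 1 := fun h' => h (Fin.ext h')
      simp [s, h, h']
  rw [h_plus, h_minus]
  exact avec_add_avec_units_mul _ θ s h_prod

theorem two_cos_rev_castSucc_mul_I {m : ℕ} (q : Fin m) (ℓ : ℝ) :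
    2 * cos (((Fin.castSucc q).rev : ℤ) * (ℓ * I)) =
      ((Real.exp (((m : ℝ) - (q : ℝ)) * ℓ) + Real.exp (((q : ℝ) - (m : ℝ)) * ℓ) : ℝ) : ℂ) := by
  have h_rev : (((Fin.castSucc q).rev : ℕ) : ℤ) = (m : ℤ) - q := by
    rw [Fin.val_rev, Fin.val_castSucc]
    omega
  rw [h_rev, ← mul_assoc, cos_mul_I, two_cosh]
  push_cast
  ring_nf

/-- Expansion of `A_δ(θ) · ∏_j (2cosh ℓ − 2cos θ_j)` into the alternating sums
`A_{δ+ω_q}` and `A_{δ+λ⁺}, A_{δ+λ⁻}` (Weyl-character form of the expansion of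
`|det(e^{−ℓ/2}I_{2m} − e^{ℓ/2}u)|` into irreducible characters of `SO(2m)`). -/
theorem weyl_discriminant_expansion_even (m : ℕ) (hm : 1 ≤ m) (ℓ : ℝ) (θ : Fin m → ℝ) :
    Avec m (deltaVec m) θ *
      ∏ j : Fin m, ((2 * Real.cosh ℓ - 2 * Real.cos (θ j) : ℝ) : ℂ) =
    (∑ q ∈ Finset.range m,
      (-1 : ℂ) ^ q *
        ((Real.exp (((m : ℝ) - (q : ℝ)) * ℓ) + Real.exp (((q : ℝ) - (m : ℝ)) * ℓ) : ℝ) : ℂ) *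
        Avec m (fun j => deltaVec m j + omegaVec m q j) θ) +
    (-1 : ℂ) ^ m *
      (Avec m (fun j => deltaVec m j + 1) θ +
       Avec m (fun j => deltaVec m j + (if (j : ℕ) = m - 1 then -1 else 1)) θ) := by
  have h_factor : ∀ j, ((2 * Real.cosh ℓ - 2 * Real.cos (θ j) : ℝ) : ℂ) =
      2 * cos (ℓ * I) - 2 * cos (θ j) := fun j => by
    push_cast
    rw [cos_mul_I]
  apply mul_left_cancel₀ (two_ne_zero (α := ℂ))
  rw [← mul_assoc, prod_congr rfl fun j _ => h_factor j,
    two_mul_avec_deltaVec_mul_prod (by omega), Fin.sum_univ_castSucc, avec_add_avec_halfSpin (by omega),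
    ← Fin.sum_univ_eq_sum_range, mul_add, mul_sum]
  congr 1
  · refine sum_congr rfl fun q _ => ?_
    rw [two_cos_rev_castSucc_mul_I, Fin.val_castSucc, ← two_mul_avec_deltaVec_add_omegaVec]
    ring
  · simp only [Fin.val_last, Fin.rev_last, Fin.val_zero, Nat.cast_zero, Int.cast_zero,
      zero_mul, cos_zero]
    ring
end

section
/- Let 0 < α < 1 and C > 0, and let B ⊆ ℤ \ {0} be a set of nonzero integers such that for every real T ≥ 1 the number of n ∈ B with |n| ≤ T is at most C·T^α. Then: (1) for every z ∈ ℂ the product ∏_{n∈B} (1 − z/n) converges absolutely (the family (1 − z/n)_{n∈B} is multipliable); (2) the function f : ℂ → ℂ defined by f(z) = ∏_{n∈B} (1 − z/n) is entire (complex differentiable on all of ℂ); (3) f(n) = 0 for every n ∈ B; and (4) there exists a constant C' > 0 such that |f(z)| ≤ exp( C'·(1 + |z|)^α ) for all z ∈ ℂ. -/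
/-!
The counting bound puts at most `C·2^((k+1)α)` elements of `B` in the dyadic block
`2^k ≤ |n| < 2^(k+1)`, so a sum `∑_{n∈B} φ(|n|)` with `φ` decreasing is controlled by
`C ∑_k 2^((k+1)α) φ(2^k)`. For `φ(t) = 1/t` this is a convergent geometric series because `α < 1`;
hence `∑ |z/n|` converges locally uniformly, and the product is multipliable and entire.
For the growth, `|f(z)| ≤ exp (∑_{n∈B} log (1 + r/|n|))` with `r = 1 + |z|`. In the dyadic sum
for `φ(t) = log (1 + r/t)` the blocks with `2^k ≤ r` are bounded through
`log (1 + x) ≤ x^(α/2)/(α/2)` and the others through `log (1 + x) ≤ x`: both give geometric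
series dominated by their term at `2^k ≈ r`, which is `O(r^α)`.
-/

open Finset Metric

section GenusZeroProduct

variable {ι : Type*} {a : ι → ℂ}

lemma summable_norm_div_of_summable_inv_norm (ha : Summable fun i ↦ ‖a i‖⁻¹) (z : ℂ) :
    Summable fun i ↦ ‖z / a i‖ :=
  (ha.mul_left ‖z‖).congr fun i ↦ by rw [norm_div, div_eq_mul_inv]

lemma multipliable_one_sub_div (ha : Summable fun i ↦ ‖a i‖⁻¹) (z : ℂ) :
    Multipliable fun i ↦ 1 - z / a i := by
  simpa only [sub_eq_add_neg] using Complex.multipliable_one_add_of_summable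
    (summable_norm_div_of_summable_inv_norm ha z).of_norm.neg

lemma differentiable_tprod_one_sub_div (ha : Summable fun i ↦ ‖a i‖⁻¹) :
    Differentiable ℂ fun z ↦ ∏' i, (1 - z / a i) := by
  intro z₀
  set R := ‖z₀‖ + 1
  have hbound : ∀ i, ∀ z ∈ ball (0 : ℂ) R, ‖-(z / a i)‖ ≤ R * ‖a i‖⁻¹ := fun i z hz ↦ by
    rw [norm_neg, norm_div, div_eq_mul_inv]
    exact mul_le_mul_of_nonneg_right (mem_ball_zero_iff.mp hz).le (by positivity)
  have hprod := (ha.mul_left R).hasProdLocallyUniformlyOn_one_add isOpen_ball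
    (.of_forall hbound) fun i ↦ by fun_prop
  have hdiff := hprod.differentiableOn (.of_forall fun s ↦ by
    simpa [Finset.prod_fn] using DifferentiableOn.finsetProd fun i _ ↦ by fun_prop) isOpen_ball
  simp only [← sub_eq_add_neg] at hdiff
  exact hdiff.differentiableAt (isOpen_ball.mem_nhds (by simp [R]))

lemma norm_one_sub_div_le {z w : ℂ} {r : ℝ} (hz : ‖z‖ ≤ r) : ‖1 - z / w‖ ≤ 1 + r / ‖w‖ :=
  (norm_sub_le _ _).trans <| by
    rw [norm_one, norm_div]
    gcongr

lemma norm_tprod_one_sub_div_le (ha : Summable fun i ↦ ‖a i‖⁻¹) {z : ℂ} {r : ℝ}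
    (hz : ‖z‖ ≤ r) :
    ‖∏' i, (1 - z / a i)‖ ≤ Real.exp (∑' i, Real.log (1 + r / ‖a i‖)) := by
  have hr : 0 ≤ r := (norm_nonneg z).trans hz
  have hpos : ∀ i, 0 < 1 + r / ‖a i‖ := fun i ↦ by positivity
  have hlog_nonneg : ∀ i, 0 ≤ Real.log (1 + r / ‖a i‖) := fun i ↦
    Real.log_nonneg (le_add_of_nonneg_right (by positivity))
  have hlog : Summable fun i ↦ Real.log (1 + r / ‖a i‖) :=
    (ha.mul_left r).of_nonneg_of_le hlog_nonneg fun i ↦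
      (Real.log_le_sub_one_of_pos (hpos i)).trans_eq (by ring)
  have hM := multipliable_one_sub_div ha z
  rw [hM.norm_tprod]
  refine le_of_tendsto' hM.norm.hasProd fun u ↦ ?_
  calc ∏ i ∈ u, ‖1 - z / a i‖ ≤ ∏ i ∈ u, Real.exp (Real.log (1 + r / ‖a i‖)) :=
        prod_le_prod (fun i _ ↦ norm_nonneg _) fun i _ ↦ by
          rw [Real.exp_log (hpos i)]
          exact norm_one_sub_div_le hz
    _ = Real.exp (∑ i ∈ u, Real.log (1 + r / ‖a i‖)) := (Real.exp_sum _ _).symm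
    _ ≤ Real.exp (∑' i, Real.log (1 + r / ‖a i‖)) :=
        Real.exp_le_exp.mpr <| hlog.sum_le_tsum u fun i _ ↦ hlog_nonneg i

end GenusZeroProduct

lemma geom_sum_range_le_of_one_lt {p : ℝ} (hp : 1 < p) (m : ℕ) :
    ∑ k ∈ range m, p ^ k ≤ p ^ m / (p - 1) := by
  rw [geom_sum_eq hp.ne']
  gcongr
  linarith

lemma sum_range_le_of_le_geom {g : ℕ → ℝ} {A B p q : ℝ} {m : ℕ} (hA : 0 ≤ A) (hB : 0 ≤ B)
    (hp : 1 < p) (hq0 : 0 ≤ q) (hq1 : q < 1)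
    (hlow : ∀ k < m, g k ≤ A * p ^ k) (hhigh : ∀ k, m ≤ k → g k ≤ B * q ^ k) (N : ℕ) :
    ∑ k ∈ range N, g k ≤ A * (p ^ m / (p - 1)) + B * (q ^ m / (1 - q)) := by
  rw [← sum_filter_add_sum_filter_not (range N) (· < m)]
  refine add_le_add ?_ ?_
  · calc _ ≤ ∑ k ∈ (range N).filter (· < m), A * p ^ k :=
          sum_le_sum fun k hk ↦ hlow k (mem_filter.mp hk).2
      _ ≤ ∑ k ∈ range m, A * p ^ k :=
          sum_le_sum_of_subset_of_nonneg
            (fun k hk ↦ by simp only [mem_filter, mem_range] at hk ⊢; omega)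
            fun k _ _ ↦ by positivity
      _ ≤ _ := by
          rw [← mul_sum]
          exact mul_le_mul_of_nonneg_left (geom_sum_range_le_of_one_lt hp m) hA
  · calc _ ≤ ∑ k ∈ (range N).filter (¬ · < m), B * q ^ k :=
          sum_le_sum fun k hk ↦ hhigh k (not_lt.mp (mem_filter.mp hk).2)
      _ ≤ ∑ k ∈ Ico m N, B * q ^ k :=
          sum_le_sum_of_subset_of_nonneg
            (fun k hk ↦ by simp only [mem_filter, mem_range, mem_Ico] at hk ⊢; omega)
            fun k _ _ ↦ by positivity
      _ ≤ _ := by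
          rw [← mul_sum]
          exact mul_le_mul_of_nonneg_left (geom_sum_Ico_le_of_lt_one hq0 hq1) hB

lemma log_one_add_le_rpow_div {x γ : ℝ} (hx : 0 ≤ x) (hγ0 : 0 < γ) (hγ1 : γ ≤ 1) :
    Real.log (1 + x) ≤ x ^ γ / γ := by
  rw [le_div_iff₀ hγ0, mul_comm, ← Real.log_rpow (by linarith)]
  calc Real.log ((1 + x) ^ γ) ≤ (1 + x) ^ γ - 1 := Real.log_le_sub_one_of_pos (by positivity)
    _ ≤ x ^ γ := by
        have := Real.rpow_add_le_add_rpow zero_le_one hx hγ0.le hγ1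
        rw [Real.one_rpow] at this
        linarith

lemma two_pow_succ_rpow (α : ℝ) (k : ℕ) :
    ((2 : ℝ) ^ (k + 1)) ^ α = 2 ^ α * (2 ^ α) ^ k := by
  rw [← Real.rpow_pow_comm zero_le_two, pow_succ']

lemma two_rpow_div_two_lt_one {α : ℝ} (hα : α < 1) : (2 : ℝ) ^ α / 2 < 1 := by
  rw [div_lt_one two_pos]
  simpa using Real.rpow_lt_rpow_of_exponent_lt one_lt_two hα

lemma sum_two_pow_succ_rpow_mul_inv_le {α : ℝ} (hα : α < 1) (N : ℕ) :
    ∑ k ∈ range N, ((2 : ℝ) ^ (k + 1)) ^ α * (2 ^ k)⁻¹ ≤ 2 ^ α / (1 - 2 ^ α / 2) := by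
  have hterm : ∀ k, ((2 : ℝ) ^ (k + 1)) ^ α * (2 ^ k)⁻¹ = 2 ^ α * (2 ^ α / 2) ^ k := fun k ↦ by
    rw [two_pow_succ_rpow, div_pow]
    ring
  have hgeom := geom_sum_Ico_le_of_lt_one (m := 0) (n := N) (by positivity)
    (two_rpow_div_two_lt_one hα)
  rw [← range_eq_Ico, pow_zero] at hgeom
  simp only [hterm, ← mul_sum]
  exact (mul_le_mul_of_nonneg_left hgeom (by positivity)).trans_eq (mul_one_div _ _)

lemma two_pow_succ_rpow_mul_log_le_rpow_half {α r : ℝ} (hα0 : 0 < α) (hα2 : α ≤ 2) (hr : 0 ≤ r)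
    (k : ℕ) :
    ((2 : ℝ) ^ (k + 1)) ^ α * Real.log (1 + r / 2 ^ k)
      ≤ 2 ^ α * r ^ (α / 2) / (α / 2) * ((2 : ℝ) ^ (α / 2)) ^ k := by
  have h2α : (2 : ℝ) ^ α = 2 ^ (α / 2) * 2 ^ (α / 2) := by
    rw [← Real.rpow_add two_pos]
    congr 1
    ring
  calc _ ≤ ((2 : ℝ) ^ (k + 1)) ^ α * ((r / 2 ^ k) ^ (α / 2) / (α / 2)) := by
        gcongr
        exact log_one_add_le_rpow_div (by positivity) (by positivity) (by linarith)
    _ = _ := by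
        rw [two_pow_succ_rpow, Real.div_rpow hr (by positivity),
          ← Real.rpow_pow_comm zero_le_two, h2α]
        field_simp
        ring

lemma two_pow_succ_rpow_mul_log_le {α r : ℝ} (hr : 0 ≤ r) (k : ℕ) :
    ((2 : ℝ) ^ (k + 1)) ^ α * Real.log (1 + r / 2 ^ k) ≤ 2 ^ α * r * (2 ^ α / 2) ^ k :=
  calc _ ≤ ((2 : ℝ) ^ (k + 1)) ^ α * (r / 2 ^ k) := by
        gcongr
        exact (Real.log_le_sub_one_of_pos (by positivity)).trans_eq (by ring)
    _ = _ := by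
        rw [two_pow_succ_rpow, div_pow]
        field_simp

lemma exists_sum_two_pow_succ_rpow_mul_log_le {α : ℝ} (hα0 : 0 < α) (hα1 : α < 1) :
    ∃ K, 0 < K ∧ ∀ r, 1 ≤ r → ∀ N : ℕ,
      ∑ k ∈ range N, ((2 : ℝ) ^ (k + 1)) ^ α * Real.log (1 + r / 2 ^ k) ≤ K * r ^ α := by
  set γ := α / 2
  set p : ℝ := 2 ^ γ
  set q : ℝ := 2 ^ α / 2
  have hp : 0 < p - 1 := sub_pos.mpr (Real.one_lt_rpow one_lt_two (by positivity))
  have hq : 0 < 1 - q := sub_pos.mpr (two_rpow_div_two_lt_one hα1)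
  refine ⟨2 ^ α * (p / (γ * (p - 1)) + (1 - q)⁻¹), by positivity, fun r hr N ↦ ?_⟩
  have hr0 : 0 < r := by linarith
  obtain ⟨j, hjr, hrj⟩ := exists_nat_pow_near hr one_lt_two
  refine (sum_range_le_of_le_geom (m := j + 1) (by positivity) (by positivity) (by linarith)
    (by positivity) (two_rpow_div_two_lt_one hα1)
    (fun k _ ↦ two_pow_succ_rpow_mul_log_le_rpow_half hα0 (by linarith) hr0.le k)
    (fun k _ ↦ two_pow_succ_rpow_mul_log_le hr0.le k) N).trans ?_
  have hpj : p ^ (j + 1) ≤ p * r ^ γ := by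
    rw [Real.rpow_pow_comm zero_le_two, ← Real.mul_rpow zero_le_two hr0.le]
    exact Real.rpow_le_rpow (by positivity) (by rw [pow_succ']; linarith) (by positivity)
  have hqj : r * q ^ (j + 1) ≤ r ^ α := by
    have : q ^ (j + 1) ≤ r ^ (α - 1) := by
      rw [div_pow, Real.rpow_pow_comm zero_le_two, ← Real.rpow_sub_one (by positivity)]
      exact Real.rpow_le_rpow_of_nonpos hr0 hrj.le (by linarith)
    calc r * q ^ (j + 1) ≤ r * r ^ (α - 1) := by gcongr
      _ = r ^ α := by rw [Real.rpow_sub_one hr0.ne', mul_div_cancel₀ _ hr0.ne']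
  have hrγ : r ^ γ * r ^ γ = r ^ α := by
    rw [← Real.rpow_add hr0]
    congr 1
    ring
  calc 2 ^ α * r ^ γ / γ * (p ^ (j + 1) / (p - 1)) + 2 ^ α * r * (q ^ (j + 1) / (1 - q))
      = 2 ^ α * r ^ γ / γ * (p ^ (j + 1) / (p - 1)) + 2 ^ α * (r * q ^ (j + 1) / (1 - q)) := by
        ring
    _ ≤ 2 ^ α * r ^ γ / γ * (p * r ^ γ / (p - 1)) + 2 ^ α * (r ^ α / (1 - q)) := by gcongr
    _ = _ := by
        rw [← hrγ]
        field_simp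

lemma Int.two_pow_log_natAbs_le_abs {n : ℤ} (hn : n ≠ 0) :
    (2 : ℝ) ^ Nat.log 2 n.natAbs ≤ |(n : ℝ)| := by
  rw [← Int.cast_abs, ← Nat.cast_natAbs]
  exact_mod_cast Nat.pow_log_le_self 2 (Int.natAbs_ne_zero.mpr hn)

lemma Int.abs_lt_two_pow_log_natAbs_succ (n : ℤ) :
    |(n : ℝ)| < (2 : ℝ) ^ (Nat.log 2 n.natAbs + 1) := by
  rw [← Int.cast_abs, ← Nat.cast_natAbs]
  exact_mod_cast Nat.lt_pow_succ_log_self one_lt_two _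

def HasCountingBound (B : Set ℤ) (C α : ℝ) : Prop :=
  ∀ T : ℝ, 1 ≤ T → (({n : ℤ | n ∈ B ∧ |(n : ℝ)| ≤ T}).ncard : ℝ) ≤ C * T ^ α

namespace HasCountingBound

variable {B : Set ℤ} {C α : ℝ}

lemma nonneg (hB : HasCountingBound B C α) : 0 ≤ C := by
  simpa using (Nat.cast_nonneg _).trans (hB 1 le_rfl)

lemma card_le (hB : HasCountingBound B C α) {T : ℝ} (hT : 1 ≤ T) {F : Finset ℤ}
    (hF : ∀ n ∈ F, n ∈ B ∧ |(n : ℝ)| ≤ T) : (#F : ℝ) ≤ C * T ^ α := by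
  have hfin : {n : ℤ | n ∈ B ∧ |(n : ℝ)| ≤ T}.Finite :=
    (isCompact_closedBall (0 : ℤ) T).finite_of_discrete.subset fun n hn ↦ by
      simpa [Int.norm_eq_abs] using hn.2
  refine le_trans ?_ (hB T hT)
  rw [← Set.ncard_coe_finset]
  exact_mod_cast Set.ncard_le_ncard (fun n hn ↦ hF n hn) hfin

variable {φ : ℝ → ℝ} {S : ℝ}

lemma sum_dyadic_block_le (hB : HasCountingBound B C α) (hB0 : (0 : ℤ) ∉ B)
    (hφ0 : ∀ t, 1 ≤ t → 0 ≤ φ t) (hφ : AntitoneOn φ (Set.Ici 1)) (k : ℕ) {G : Finset ℤ}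
    (hG : ∀ n ∈ G, n ∈ B ∧ Nat.log 2 n.natAbs = k) :
    ∑ n ∈ G, φ |(n : ℝ)| ≤ C * ((2 : ℝ) ^ (k + 1)) ^ α * φ (2 ^ k) := by
  have hk : (1 : ℝ) ≤ 2 ^ k := one_le_pow₀ one_le_two
  have hpow : ∀ n ∈ G, (2 : ℝ) ^ k ≤ |(n : ℝ)| := fun n hn ↦ by
    rw [← (hG n hn).2]
    exact Int.two_pow_log_natAbs_le_abs fun h ↦ hB0 (h ▸ (hG n hn).1)
  have hcard : (#G : ℝ) ≤ C * ((2 : ℝ) ^ (k + 1)) ^ α :=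
    hB.card_le (one_le_pow₀ one_le_two) fun n hn ↦ ⟨(hG n hn).1, by
      rw [← (hG n hn).2]
      exact (Int.abs_lt_two_pow_log_natAbs_succ n).le⟩
  calc ∑ n ∈ G, φ |(n : ℝ)| ≤ ∑ _n ∈ G, φ (2 ^ k) :=
        sum_le_sum fun n hn ↦ hφ hk (hk.trans (hpow n hn)) (hpow n hn)
    _ = #G * φ (2 ^ k) := by rw [sum_const, nsmul_eq_mul]
    _ ≤ C * ((2 : ℝ) ^ (k + 1)) ^ α * φ (2 ^ k) := mul_le_mul_of_nonneg_right hcard (hφ0 _ hk)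

lemma sum_le_of_dyadic (hB : HasCountingBound B C α) (hB0 : (0 : ℤ) ∉ B)
    (hφ0 : ∀ t, 1 ≤ t → 0 ≤ φ t) (hφ : AntitoneOn φ (Set.Ici 1))
    (hS : ∀ K, ∑ k ∈ range K, ((2 : ℝ) ^ (k + 1)) ^ α * φ (2 ^ k) ≤ S) {F : Finset ℤ}
    (hF : ∀ n ∈ F, n ∈ B) : ∑ n ∈ F, φ |(n : ℝ)| ≤ C * S := by
  classical
  set K := F.sup (fun n ↦ Nat.log 2 n.natAbs) + 1
  have hmaps : ∀ n ∈ F, Nat.log 2 n.natAbs ∈ range K := fun n hn ↦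
    mem_range.mpr (Nat.lt_succ_of_le (le_sup (f := fun n ↦ Nat.log 2 n.natAbs) hn))
  rw [← sum_fiberwise_of_maps_to hmaps]
  calc _ ≤ ∑ k ∈ range K, C * ((2 : ℝ) ^ (k + 1)) ^ α * φ (2 ^ k) :=
        sum_le_sum fun k _ ↦ hB.sum_dyadic_block_le hB0 hφ0 hφ k fun n hn ↦
          ⟨hF n (mem_filter.mp hn).1, (mem_filter.mp hn).2⟩
    _ ≤ C * S := by
        simp only [mul_assoc, ← mul_sum]
        exact mul_le_mul_of_nonneg_left (hS K) hB.nonneg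

lemma summable_and_tsum_le_of_dyadic (hB : HasCountingBound B C α) (hB0 : (0 : ℤ) ∉ B)
    (hφ0 : ∀ t, 1 ≤ t → 0 ≤ φ t) (hφ : AntitoneOn φ (Set.Ici 1))
    (hS : ∀ K, ∑ k ∈ range K, ((2 : ℝ) ^ (k + 1)) ^ α * φ (2 ^ k) ≤ S) :
    Summable (fun n : B ↦ φ |(n : ℝ)|) ∧ ∑' n : B, φ |(n : ℝ)| ≤ C * S := by
  have hsum : ∀ u : Finset B, ∑ n ∈ u, φ |(n : ℝ)| ≤ C * S := fun u ↦ by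
    simpa using hB.sum_le_of_dyadic hB0 hφ0 hφ hS (F := u.map (Function.Embedding.subtype _))
      (by simp +contextual)
  have hsummable : Summable (fun n : B ↦ φ |(n : ℝ)|) :=
    summable_of_sum_le (fun n ↦ hφ0 _ <| (one_le_pow₀ one_le_two).trans <|
      Int.two_pow_log_natAbs_le_abs fun h ↦ hB0 (h ▸ n.2)) hsum
  exact ⟨hsummable, hsummable.tsum_le_of_sum_le hsum⟩

lemma summable_inv_norm (hB : HasCountingBound B C α) (hB0 : (0 : ℤ) ∉ B) (hα : α < 1) :
    Summable fun n : B ↦ ‖((n : ℤ) : ℂ)‖⁻¹ := by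
  have hφ : AntitoneOn (fun t : ℝ ↦ t⁻¹) (Set.Ici 1) := fun s hs t _ hst ↦
    inv_anti₀ (zero_lt_one.trans_le hs) hst
  simpa only [Complex.norm_intCast] using (hB.summable_and_tsum_le_of_dyadic hB0
    (fun t ht ↦ inv_nonneg.mpr (zero_le_one.trans ht)) hφ
    (sum_two_pow_succ_rpow_mul_inv_le hα)).1

lemma exists_tsum_log_one_add_div_le (hB : HasCountingBound B C α) (hB0 : (0 : ℤ) ∉ B)
    (hα0 : 0 < α) (hα1 : α < 1) (hC : 0 < C) :
    ∃ K, 0 < K ∧ ∀ r, 1 ≤ r → ∑' n : B, Real.log (1 + r / ‖((n : ℤ) : ℂ)‖) ≤ K * r ^ α := by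
  obtain ⟨K, hK0, hK⟩ := exists_sum_two_pow_succ_rpow_mul_log_le hα0 hα1
  refine ⟨C * K, by positivity, fun r hr ↦ ?_⟩
  have hr0 : 0 < r := by linarith
  have hφ : AntitoneOn (fun t ↦ Real.log (1 + r / t)) (Set.Ici 1) := fun s hs t _ hst ↦ by
    have hs0 : 0 < s := zero_lt_one.trans_le hs
    have ht0 : 0 < t := hs0.trans_le hst
    exact Real.log_le_log (by positivity) (by gcongr)
  simpa only [Complex.norm_intCast, mul_assoc] using (hB.summable_and_tsum_le_of_dyadic hB0
    (fun t ht ↦ Real.log_nonneg (le_add_of_nonneg_right (div_nonneg hr0.le (by linarith)))) hφ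
    (hK r hr)).2

end HasCountingBound

/-- For a set `B` of nonzero integers with counting function at most `C·T^α`
(`0 < α < 1`): the family `(1 − z/n)_{n ∈ B}` is absolutely convergent and
multipliable for every `z`; the function `z ↦ ∏_{n∈B} (1 − z/n)` is entire;
it vanishes on `B`; and it is bounded by `exp(C'(1+|z|)^α)` for some `C' > 0`. -/
theorem canonical_product_entire_vanishing
    (α C : ℝ) (hα0 : 0 < α) (hα1 : α < 1) (hC : 0 < C)
    (B : Set ℤ) (hB0 : (0 : ℤ) ∉ B)
    (hcount : ∀ T : ℝ, 1 ≤ T →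
      (({n : ℤ | n ∈ B ∧ |(n : ℝ)| ≤ T}).ncard : ℝ) ≤ C * T ^ α) :
    (∀ z : ℂ, Summable (fun n : B => ‖z / ((n : ℤ) : ℂ)‖)) ∧
    (∀ z : ℂ, Multipliable (fun n : B => 1 - z / ((n : ℤ) : ℂ))) ∧
    Differentiable ℂ (fun z : ℂ => ∏' n : B, (1 - z / ((n : ℤ) : ℂ))) ∧
    (∀ n : ℤ, n ∈ B → (∏' k : B, (1 - (n : ℂ) / ((k : ℤ) : ℂ))) = 0) ∧
    (∃ C' : ℝ, 0 < C' ∧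
      ∀ z : ℂ, ‖∏' n : B, (1 - z / ((n : ℤ) : ℂ))‖ ≤
        Real.exp (C' * (1 + ‖z‖) ^ α)) := by
  have hB : HasCountingBound B C α := hcount
  have hinv := hB.summable_inv_norm hB0 hα1
  obtain ⟨K, hK0, hK⟩ := hB.exists_tsum_log_one_add_div_le hB0 hα0 hα1 hC
  refine ⟨summable_norm_div_of_summable_inv_norm hinv, multipliable_one_sub_div hinv,
    differentiable_tprod_one_sub_div hinv, fun n hn ↦ ?_, K, hK0, fun z ↦ ?_⟩
  · have hn0 : (n : ℂ) ≠ 0 := Int.cast_ne_zero.mpr (ne_of_mem_of_not_mem hn hB0)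
    exact tprod_of_exists_eq_zero ⟨⟨n, hn⟩, by simp [hn0]⟩
  · calc _ ≤ Real.exp (∑' n : B, Real.log (1 + (1 + ‖z‖) / ‖((n : ℤ) : ℂ)‖)) :=
          norm_tprod_one_sub_div_le hinv (by linarith)
      _ ≤ _ := Real.exp_le_exp.mpr (hK _ (by linarith [norm_nonneg z]))
end
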